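/- Any specifiable policy is deterministic: if a policy π is the unique optimal policy for some teleo-environment ε, then π is deterministic. -/

import Mathlib

open scoped ENNReal BigOperators

structure Transducer (I O : Type) [Fintype O] where
  State : Type
  init : State
  out : State → O → ℝ≥0∞
  out_sum : ∀ st, ∑ o, out st o = 1
  step : State → I → O → State

namespace Transducer

variable {I O : Type} [Fintype O]

/-- The transducer evolved by a single input-output pair. -/
def evolve (t : Transducer I O) (i : I) (o : O) : Transducer I O :=
  { t with init := t.step t.init i o }

def stepSeq (t : Transducer I O) : t.State → List (I × O) → t.State
  | st, [] => st
  | st, p :: rest => t.stepSeq (t.step st p.1 p.2) rest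

/-- The transducer evolved along a finite sequence of input-output pairs. -/
def evolveSeq (t : Transducer I O) (l : List (I × O)) : Transducer I O :=
  { t with init := t.stepSeq t.init l }

/-- Induced behaviour: conditional probability of an output sequence given an
input sequence of the same length. -/
noncomputable def beh : Transducer I O → List I → List O → ℝ≥0∞
  | _, [], [] => 1
  | t, i :: is, o :: os => t.out t.init o * beh (t.evolve i o) is os
  | _, _, _ => 0

/-- Behavioural equality of transducers. -/
def BehEq (t u : Transducer I O) : Prop :=
  ∀ is os, t.beh is os = u.beh is os

/-- States reachable from the initial state along possible transitions. -/
inductive Reachable (t : Transducer I O) : t.State → Prop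
  | init : Reachable t t.init
  | step {st : t.State} (i : I) (o : O) :
      Reachable t st → t.out st o ≠ 0 → Reachable t (t.step st i o)

/-- A transducer is deterministic if every reachable output distribution is a
point mass. -/
def Deterministic (t : Transducer I O) : Prop :=
  ∀ st, t.Reachable st → ∃ o, t.out st o = 1

end Transducer

/-- A policy: a transducer from sensor values to actions. -/
abbrev Policy (S A : Type) [Fintype A] := Transducer S A

/-- A teleo-environment: a transducer from actions to pairs of a sensor value
and a success signal (`true` = success ⊤, `false` = ⊥). -/
abbrev Env (S A : Type) [Fintype S] := Transducer A (S × Bool)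

section Value

variable {S A : Type} [Fintype S] [Fintype A]

/-- Probability that success occurs at least once within the first `n` steps of
the coupled process of a policy and a teleo-environment. -/
noncomputable def succProb : ℕ → Policy S A → Env S A → ℝ≥0∞
  | 0, _, _ => 0
  | n + 1, π, ε =>
      ∑ a : A, ∑ p : S × Bool,
        π.out π.init a * ε.out ε.init p *
          (if p.2 then 1 else succProb n (π.evolve p.1 a) (ε.evolve a p))

/-- The value of a policy in a teleo-environment: the probability that success
occurs at least once in the coupled process. -/
noncomputable def value (π : Policy S A) (ε : Env S A) : ℝ≥0∞ :=
  ⨆ n, succProb n π ε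

/-- A policy is optimal for a teleo-environment if its value is maximal among
all policies. -/
def Optimal (π : Policy S A) (ε : Env S A) : Prop :=
  ∀ π' : Policy S A, value π' ε ≤ value π ε

/-- A policy is uniquely optimal if it is optimal and every optimal policy is
behaviourally equal to it. -/
def UniquelyOptimal (π : Policy S A) (ε : Env S A) : Prop :=
  Optimal π ε ∧ ∀ π' : Policy S A, Optimal π' ε → π'.BehEq π

/-- Probability of a finite interaction history (action, sensor value, success
signal per step) in the coupled process. -/
noncomputable def trajProbG : Policy S A → Env S A → List ((A × S) × Bool) → ℝ≥0∞
  | _, _, [] => 1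
  | π, ε, (p, g) :: rest =>
      π.out π.init p.1 * ε.out ε.init (p.2, g) *
        trajProbG (π.evolve p.2 p.1) (ε.evolve p.1 (p.2, g)) rest

/-- A finite action-sensor history occurs with positive probability in the
coupled process (marginalising over the unobserved success signals). -/
def PosProb (π : Policy S A) (ε : Env S A) (h : List (A × S)) : Prop :=
  ∃ l : List ((A × S) × Bool), l.map Prod.fst = h ∧ trajProbG π ε l ≠ 0

/-- The policy evolved along an action-sensor history (inputs are the sensor
values, outputs the actions). -/
def Policy.evolveBy (π : Policy S A) (h : List (A × S)) : Policy S A :=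
  Transducer.evolveSeq π (h.map fun p => (p.2, p.1))

/-- Value-laden filtering: the environment evolved along the actions and sensor
values, with every success signal set to ⊥ (no success). -/
def Env.vlEvolveBy (ε : Env S A) (h : List (A × S)) : Env S A :=
  Transducer.evolveSeq ε (h.map fun p => (p.1, (p.2, false)))

end Value

/-!
Suppose `π` is optimal but, after some possible history `P`, plays two actions with positive
probability. Let `a₀` maximise the Q-value at `P`, computed in the environment conditioned on
`P` with no success so far (after a success the value is `1` whatever the policy does). The
policy that agrees with `π` except that after `P` it plays `a₀` with certainty replaces an
average of Q-values by their maximum, so its value is at least that of `π`: it is optimal too,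
yet it is not behaviourally equal to `π`.
-/

namespace Transducer

variable {I O : Type} [Fintype O]

lemma out_le_one (t : Transducer I O) (st : t.State) (o : O) : t.out st o ≤ 1 := by
  rw [← t.out_sum st]
  exact Finset.single_le_sum (fun _ _ => zero_le) (Finset.mem_univ o)

lemma out_ne_top (t : Transducer I O) (st : t.State) (o : O) : t.out st o ≠ ⊤ :=
  ne_top_of_le_ne_top ENNReal.one_ne_top (t.out_le_one st o)

lemma nonempty_output (t : Transducer I O) : Nonempty O := by
  by_contra hO
  rw [not_nonempty_iff] at hO
  simpa using t.out_sum t.init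

lemma exists_ne_out_ne_zero (t : Transducer I O) {st : t.State} (h : ∀ o, t.out st o ≠ 1)
    (o₀ : O) : ∃ o ≠ o₀, t.out st o ≠ 0 := by
  by_contra! hzero
  apply h o₀
  rw [← t.out_sum st, Finset.sum_eq_single o₀ (fun o _ ho => hzero o ho) (by simp)]

lemma beh_cons (t : Transducer I O) (i : I) (o : O) (is : List I) (os : List O) :
    t.beh (i :: is) (o :: os) = t.out t.init o * (t.evolve i o).beh is os := rfl

lemma stepSeq_evolve (t : Transducer I O) (i : I) (o : O) (st : t.State) (l : List (I × O)) :
    (t.evolve i o).stepSeq st l = t.stepSeq st l := by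
  induction l generalizing st with
  | nil => rfl
  | cons p l ih => exact ih _

lemma evolveSeq_cons (t : Transducer I O) (p : I × O) (l : List (I × O)) :
    t.evolveSeq (p :: l) = (t.evolve p.1 p.2).evolveSeq l := by
  change ({ t with init := t.stepSeq (t.step t.init p.1 p.2) l } : Transducer I O) =
    { t with init := (t.evolve p.1 p.2).stepSeq (t.step t.init p.1 p.2) l }
  rw [stepSeq_evolve]

lemma stepSeq_append (t : Transducer I O) (st : t.State) (l₁ l₂ : List (I × O)) :
    t.stepSeq st (l₁ ++ l₂) = t.stepSeq (t.stepSeq st l₁) l₂ := by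
  induction l₁ generalizing st with
  | nil => rfl
  | cons p l₁ ih => exact ih _

lemma beh_append_singleton (t : Transducer I O) (l : List (I × O)) (i : I) (o : O) :
    t.beh (l.map Prod.fst ++ [i]) (l.map Prod.snd ++ [o]) =
      t.beh (l.map Prod.fst) (l.map Prod.snd) * t.out (t.stepSeq t.init l) o := by
  induction l generalizing t with
  | nil => simp [beh_cons, beh, stepSeq]
  | cons p l ih =>
    simp only [List.map_cons, List.cons_append, beh_cons, ih, mul_assoc]
    congr 3
    exact stepSeq_evolve _ _ _ _ _

lemma Reachable.exists_history {t : Transducer I O} {st : t.State} (h : t.Reachable st) :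
    ∃ l : List (I × O),
      t.stepSeq t.init l = st ∧ t.beh (l.map Prod.fst) (l.map Prod.snd) ≠ 0 := by
  induction h with
  | init => exact ⟨[], rfl, one_ne_zero⟩
  | step i o _ ho ih =>
    obtain ⟨l, rfl, hl⟩ := ih
    refine ⟨l ++ [(i, o)], by rw [stepSeq_append]; rfl, ?_⟩
    simpa [beh_append_singleton] using mul_ne_zero hl ho

lemma exists_branching_history_of_not_deterministic {t : Transducer I O}
    (h : ¬ t.Deterministic) :
    ∃ l : List (I × O), ∀ o₀ i, ∃ o ≠ o₀,
      t.beh (l.map Prod.fst ++ [i]) (l.map Prod.snd ++ [o]) ≠ 0 := by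
  simp only [Deterministic, not_forall, not_exists] at h
  obtain ⟨st, hst, hpt⟩ := h
  obtain ⟨l, rfl, hl⟩ := hst.exists_history
  refine ⟨l, fun o₀ i => ?_⟩
  obtain ⟨o, hne, ho⟩ := t.exists_ne_out_ne_zero hpt o₀
  exact ⟨o, hne, by rw [beh_append_singleton]; exact mul_ne_zero hl ho⟩

lemma BehEq.of_hom {t u : Transducer I O} (f : t.State → u.State) (hinit : u.init = f t.init)
    (hout : ∀ s o, u.out (f s) o = t.out s o)
    (hstep : ∀ s i o, u.step (f s) i o = f (t.step s i o)) : u.BehEq t := by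
  intro is
  induction is generalizing t u with
  | nil => intro os; cases os <;> rfl
  | cons i is ih =>
    rintro (_ | ⟨o, os⟩)
    · rfl
    rw [beh_cons, beh_cons, hinit, hout]
    congr 1
    have hinit' : (u.evolve i o).init = f (t.evolve i o).init := by simp [evolve, hinit, hstep]
    exact ih (t := t.evolve i o) (u := u.evolve i o) f hinit' hout hstep os

lemma BehEq.out_init [Nonempty I] {t u : Transducer I O} (h : t.BehEq u) (o : O) :
    t.out t.init o = u.out u.init o := by
  obtain ⟨i⟩ := ‹Nonempty I›
  simpa [beh_cons, beh] using h [i] [o]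

lemma BehEq.evolve {t u : Transducer I O} (h : t.BehEq u) (i : I) {o : O}
    (ho : t.out t.init o ≠ 0) : (t.evolve i o).BehEq (u.evolve i o) := by
  have : Nonempty I := ⟨i⟩
  intro is os
  have h' := h (i :: is) (o :: os)
  rwa [beh_cons, beh_cons, ← h.out_init, ENNReal.mul_right_inj ho (t.out_ne_top _ _)] at h'

/-- The transducer with first output distribution `d` that continues as `c i o` after
the first step `(i, o)`. -/
def node (d : O → ℝ≥0∞) (hd : ∑ o, d o = 1) (c : I → O → Transducer I O) :
    Transducer I O where
  State := Option (Σ p : I × O, (c p.1 p.2).State)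
  init := none
  out
    | none => d
    | some ⟨p, s⟩ => (c p.1 p.2).out s
  out_sum
    | none => hd
    | some ⟨p, s⟩ => (c p.1 p.2).out_sum s
  step
    | none, i, o => some ⟨(i, o), (c i o).init⟩
    | some ⟨p, s⟩, i, o => some ⟨p, (c p.1 p.2).step s i o⟩

lemma node_out_init (d : O → ℝ≥0∞) (hd : ∑ o, d o = 1) (c : I → O → Transducer I O) :
    (node d hd c).out (node d hd c).init = d := rfl

lemma behEq_node_evolve (d : O → ℝ≥0∞) (hd : ∑ o, d o = 1) (c : I → O → Transducer I O)
    (i : I) (o : O) : ((node d hd c).evolve i o).BehEq (c i o) :=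
  BehEq.of_hom (fun s => some ⟨(i, o), s⟩) rfl (fun _ _ => rfl) (fun _ _ _ => rfl)

end Transducer

lemma Policy.evolveBy_cons {S A : Type} [Fintype A] (π : Policy S A) (a : A) (s : S)
    (P : List (A × S)) : π.evolveBy ((a, s) :: P) = Policy.evolveBy (π.evolve s a) P :=
  π.evolveSeq_cons _ _

lemma Env.vlEvolveBy_cons {S A : Type} [Fintype S] (ε : Env S A) (a : A) (s : S)
    (P : List (A × S)) :
    ε.vlEvolveBy ((a, s) :: P) = Env.vlEvolveBy (ε.evolve a (s, false)) P :=
  ε.evolveSeq_cons _ _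

section Value

open Transducer

variable {S A : Type} [Fintype S] [Fintype A]

lemma succProb_le_succProb_succ (n : ℕ) (π : Policy S A) (ε : Env S A) :
    succProb n π ε ≤ succProb (n + 1) π ε := by
  induction n generalizing π ε with
  | zero => exact zero_le
  | succ n ih =>
    rw [succProb, succProb]
    gcongr with a _ p _
    split_ifs
    exacts [le_rfl, ih _ _]

lemma succProb_monotone (π : Policy S A) (ε : Env S A) : Monotone fun n => succProb n π ε :=
  monotone_nat_of_le_succ fun n => succProb_le_succProb_succ n π ε

noncomputable def qValue (π : Policy S A) (ε : Env S A) (a : A) : ℝ≥0∞ :=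
  ∑ p : S × Bool, ε.out ε.init p * (if p.2 then 1 else value (π.evolve p.1 a) (ε.evolve a p))

theorem value_eq_sum_qValue (π : Policy S A) (ε : Env S A) :
    value π ε = ∑ a, π.out π.init a * qValue π ε a := by
  set g : A → S × Bool → ℕ → ℝ≥0∞ := fun a p n => π.out π.init a * (ε.out ε.init p *
      (if p.2 then 1 else succProb n (π.evolve p.1 a) (ε.evolve a p))) with hg
  have hmono : ∀ a p, Monotone (g a p) := by
    intro a p m n hmn
    simp only [hg]
    gcongr
    split_ifs
    exacts [le_rfl, succProb_monotone _ _ hmn]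
  calc value π ε = ⨆ n, succProb (n + 1) π ε :=
        ((succProb_monotone π ε).iSup_nat_add 1).symm
    _ = ⨆ n, ∑ a, ∑ p, g a p n := by simp only [hg, succProb, mul_assoc]
    _ = ∑ a, ∑ p, ⨆ n, g a p n := by
      refine (ENNReal.finsetSum_iSup_of_monotone fun a _ _ hmn =>
        Finset.sum_le_sum fun p _ => hmono a p hmn).symm.trans ?_
      exact Finset.sum_congr rfl fun a _ =>
        (ENNReal.finsetSum_iSup_of_monotone (hmono a)).symm
    _ = ∑ a, π.out π.init a * qValue π ε a := by
      simp only [hg, ← ENNReal.mul_iSup, qValue, Finset.mul_sum]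
      congr! 4 with a _ p _
      split_ifs <;> simp [value]

lemma succProb_congr {π₁ π₂ : Policy S A} (h : π₁.BehEq π₂) (n : ℕ) (ε : Env S A) :
    succProb n π₁ ε = succProb n π₂ ε := by
  induction n generalizing π₁ π₂ ε with
  | zero => rfl
  | succ n ih =>
    have : Nonempty S := ε.nonempty_output.map Prod.fst
    rw [succProb, succProb]
    refine Finset.sum_congr rfl fun a _ => Finset.sum_congr rfl fun p _ => ?_
    rw [← h.out_init a]
    by_cases ha : π₁.out π₁.init a = 0
    · simp [ha]
    · split_ifs
      · rfl
      · rw [ih (h.evolve p.1 ha)]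

lemma value_congr {π₁ π₂ : Policy S A} (h : π₁.BehEq π₂) (ε : Env S A) :
    value π₁ ε = value π₂ ε :=
  iSup_congr fun n => succProb_congr h n ε

lemma qValue_mono {π₁ π₂ : Policy S A} {ε : Env S A} {a : A}
    (h : ∀ s, value (π₁.evolve s a) (ε.evolve a (s, false)) ≤
      value (π₂.evolve s a) (ε.evolve a (s, false))) :
    qValue π₁ ε a ≤ qValue π₂ ε a := by
  refine Finset.sum_le_sum fun p _ => ?_
  obtain ⟨s, _ | _⟩ := p
  · simpa using mul_le_mul_right (h s) _
  · rfl

lemma qValue_congr {π₁ π₂ : Policy S A} {ε : Env S A} {a : A}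
    (h : ∀ s, (π₁.evolve s a).BehEq (π₂.evolve s a)) : qValue π₁ ε a = qValue π₂ ε a :=
  le_antisymm (qValue_mono fun s => (value_congr (h s) _).le)
    (qValue_mono fun s => (value_congr (h s) _).ge)

lemma value_le_qValue_of_forall_le {π : Policy S A} {ε : Env S A} {a₀ : A}
    (hmax : ∀ a, qValue π ε a ≤ qValue π ε a₀) : value π ε ≤ qValue π ε a₀ :=
  calc value π ε = ∑ a, π.out π.init a * qValue π ε a := value_eq_sum_qValue π ε
    _ ≤ ∑ a, π.out π.init a * qValue π ε a₀ := by gcongr with a; exact hmax a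
    _ = qValue π ε a₀ := by rw [← Finset.sum_mul, π.out_sum, one_mul]

lemma value_le_value_of_qValue_le {π₁ π₂ : Policy S A} {ε : Env S A}
    (hout : π₁.out π₁.init = π₂.out π₂.init) (hq : ∀ a, qValue π₁ ε a ≤ qValue π₂ ε a) :
    value π₁ ε ≤ value π₂ ε := by
  rw [value_eq_sum_qValue, value_eq_sum_qValue, hout]
  gcongr with a
  exact hq a

theorem exists_value_le_and_commits_after (P : List (A × S)) (π : Policy S A) (ε : Env S A)
    (a₀ : A) (hmax : ∀ a, qValue (π.evolveBy P) (ε.vlEvolveBy P) a ≤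
      qValue (π.evolveBy P) (ε.vlEvolveBy P) a₀) :
    ∃ π' : Policy S A, value π ε ≤ value π' ε ∧
      ∀ s a, a ≠ a₀ → π'.beh (P.map Prod.snd ++ [s]) (P.map Prod.fst ++ [a]) = 0 := by
  classical
  induction P generalizing π ε with
  | nil =>
    refine ⟨node (fun a => if a = a₀ then 1 else 0) (by simp) π.evolve, ?_,
      fun s a ha => ?_⟩
    · calc value π ε ≤ qValue π ε a₀ := value_le_qValue_of_forall_le hmax
        _ = value _ ε := by
          rw [value_eq_sum_qValue, node_out_init]
          simpa using (qValue_congr fun s => behEq_node_evolve _ _ π.evolve s a₀).symm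
    · simp [beh_cons, beh, node_out_init, ha]
  | cons q P ih =>
    obtain ⟨a₁, s₁⟩ := q
    rw [Policy.evolveBy_cons, Env.vlEvolveBy_cons] at hmax
    obtain ⟨π'', hle, hzero⟩ := ih (π.evolve s₁ a₁) (ε.evolve a₁ (s₁, false)) hmax
    let c : S → A → Policy S A := fun s a =>
      if s = s₁ ∧ a = a₁ then π'' else π.evolve s a
    refine ⟨node (π.out π.init) (π.out_sum _) c, ?_, fun s a ha => ?_⟩
    · refine value_le_value_of_qValue_le rfl fun a => qValue_mono fun s => ?_
      rw [value_congr (behEq_node_evolve _ _ c s a)]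
      by_cases hsa : s = s₁ ∧ a = a₁
      · obtain ⟨rfl, rfl⟩ := hsa
        simpa [c] using hle
      · simp [c, hsa]
    · simp only [List.map_cons, List.cons_append, beh_cons]
      rw [behEq_node_evolve _ _ c s₁ a₁]
      simp [c, hzero s a ha]

end Value

/-- **Specifiable policies are deterministic.** If a policy `π` is uniquely
optimal for some teleo-environment `ε` (optimal, with every optimal policy
behaviourally equal to `π`), then `π` is deterministic. -/
theorem specifiable_implies_deterministic
    {S A : Type} [Fintype S] [Fintype A]
    (π : Policy S A) (ε : Env S A) (h : UniquelyOptimal π ε) :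
    π.Deterministic := by
  by_contra hdet
  obtain ⟨l, hbranch⟩ := Transducer.exists_branching_history_of_not_deterministic hdet
  set P := l.map Prod.swap
  have : Nonempty A := π.nonempty_output
  obtain ⟨a₀, hmax⟩ := Finite.exists_max (qValue (π.evolveBy P) (ε.vlEvolveBy P))
  obtain ⟨π', hle, hcommit⟩ := exists_value_le_and_commits_after P π ε a₀ hmax
  have hbeh : π'.BehEq π := h.2 π' fun π'' => (h.1 π'').trans hle
  obtain ⟨s, -⟩ := ε.nonempty_output
  obtain ⟨a, hne, hpos⟩ := hbranch a₀ s
  refine hpos ?_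
  rw [← hbeh, ← hcommit s a hne]
  simp only [P, List.map_map]
  rfl
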